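/- arXiv:1010.2910 — 9 statements merged into one kernel-verified Lean document; each statement's English description precedes it below -/
import Mathlib

section
/- Let S be an AG-groupoid with left identity. If for every a in S, a ∈ (a*a)*S (where (a*a)*S = {(a*a)*s : s ∈ S}), then S is regular, i.e., for every a in S there exists x in S with a = (a*x)*a. -/
/-- If every a lies in (a*a)*S, then the AG-groupoid with left identity
    is regular. -/
theorem ag_regular_of_mem_sq {S : Type*} (mul : S → S → S)
    (hinv : ∀ a b c : S, mul (mul a b) c = mul (mul c b) a)
    (e : S) (he : ∀ x : S, mul e x = x)
    (h : ∀ a : S, ∃ s : S, a = mul (mul a a) s) :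
    ∀ a : S, ∃ x : S, a = mul (mul a x) a := by
  intro a
  obtain ⟨s, hs⟩ := h a
  refine ⟨s, ?_⟩
  calc a = mul (mul a a) s := hs
    _ = mul (mul s a) a := hinv a a s
    _ = mul (mul (mul e s) a) a := by rw [he]
    _ = mul (mul (mul a s) e) a := by rw [hinv e s a]
    _ = mul (mul (mul (mul (mul a a) s) s) e) a := by rw [← hs]
    _ = mul (mul (mul (mul (mul s a) a) s) e) a := by rw [hinv a a s]
    _ = mul (mul (mul (mul s a) (mul s a)) e) a := by rw [hinv (mul s a) a s]
    _ = mul (mul (mul e (mul s a)) (mul s a)) a := by rw [hinv (mul s a) (mul s a) e]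
    _ = mul (mul (mul s a) (mul s a)) a := by rw [he]
    _ = mul (mul (mul (mul s a) a) s) a := by rw [hinv (mul s a) a s]
    _ = mul (mul (mul (mul a a) s) s) a := by rw [hinv a a s]
    _ = mul (mul a s) a := by rw [← hs]
end

section
/- Every fuzzy right ideal of an AG-groupoid with left identity is a fuzzy left ideal: if μ : S → [0,1] satisfies μ(x*y) ≥ μ(x) for all x, y, then μ(x*y) ≥ μ(y) for all x, y. -/
theorem mul_eq_mul_swap_mul_of_leftInvertive {S : Type*} (mul : S → S → S)
    (hinv : ∀ a b c : S, mul (mul a b) c = mul (mul c b) a)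
    (e : S) (he : ∀ x : S, mul e x = x) (x y : S) :
    mul x y = mul (mul y x) e :=
  calc mul x y = mul (mul e x) y := by rw [he]
    _ = mul (mul y x) e := hinv e x y

theorem fuzzy_right_ideal_is_left_general {S : Type*} (mul : S → S → S)
    (hinv : ∀ a b c : S, mul (mul a b) c = mul (mul c b) a)
    (e : S) (he : ∀ x : S, mul e x = x)
    (μ : S → ℝ)
    (hright : ∀ x y : S, μ x ≤ μ (mul x y)) :
    ∀ x y : S, μ y ≤ μ (mul x y) := by
  intro x y
  rw [mul_eq_mul_swap_mul_of_leftInvertive mul hinv e he x y]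
  exact (hright y x).trans (hright (mul y x) e)

/-- Every fuzzy right ideal of an AG-groupoid with left identity is a
    fuzzy left ideal. -/
theorem fuzzy_right_ideal_is_left {S : Type*} (mul : S → S → S)
    (hinv : ∀ a b c : S, mul (mul a b) c = mul (mul c b) a)
    (e : S) (he : ∀ x : S, mul e x = x)
    (μ : S → ℝ) (hμ0 : ∀ x, 0 ≤ μ x) (hμ1 : ∀ x, μ x ≤ 1)
    (hright : ∀ x y : S, μ x ≤ μ (mul x y)) :
    ∀ x y : S, μ y ≤ μ (mul x y) :=
  fuzzy_right_ideal_is_left_general mul hinv e he μ hright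
end

section
/- In a regular AG-groupoid, every fuzzy two-sided ideal μ satisfies: for all a there exist b, c with a = b*c and min(μ(b), μ(c)) ≥ μ(a) (i.e., μ is idempotent under the sup-min product: μ∘μ = μ). -/
theorem fuzzy_two_sided_idempotent_general {S : Type*} (mul : S → S → S)
    (hreg : ∀ a : S, ∃ x : S, a = mul (mul a x) a)
    (μ : S → ℝ)
    (hideal : ∀ x y : S, max (μ x) (μ y) ≤ μ (mul x y)) :
    ∀ a : S, ∃ b c : S, a = mul b c ∧ μ a ≤ min (μ b) (μ c) := by
  intro a
  obtain ⟨x, hx⟩ := hreg a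
  exact ⟨mul a x, a, hx, le_min ((le_max_left _ _).trans (hideal a x)) le_rfl⟩

/-- In a regular AG-groupoid, every fuzzy two-sided ideal μ satisfies:
    each a factors as a = b*c with min(μ b, μ c) ≥ μ a. -/
theorem fuzzy_two_sided_idempotent {S : Type*} (mul : S → S → S)
    (hinv : ∀ a b c : S, mul (mul a b) c = mul (mul c b) a)
    (hreg : ∀ a : S, ∃ x : S, a = mul (mul a x) a)
    (μ : S → ℝ) (hμ0 : ∀ x, 0 ≤ μ x) (hμ1 : ∀ x, μ x ≤ 1)
    (hideal : ∀ x y : S, max (μ x) (μ y) ≤ μ (mul x y)) :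
    ∀ a : S, ∃ b c : S, a = mul b c ∧ μ a ≤ min (μ b) (μ c) :=
  fuzzy_two_sided_idempotent_general mul hreg μ hideal
end

section
/- If μ is a fuzzy two-sided ideal of a regular AG-groupoid S with left identity, then μ(a*b) = μ(b*a) for all a, b in S. -/
theorem mul_swap_eq_mul_leftIdentity {S : Type*} (mul : S → S → S)
    (hinv : ∀ a b c : S, mul (mul a b) c = mul (mul c b) a)
    (e : S) (he : ∀ x : S, mul e x = x) (a b : S) :
    mul b a = mul (mul a b) e := by
  rw [hinv a b e, he]

theorem le_mul_swap_of_le_mul_right {S β : Type*} [Preorder β] (mul : S → S → S)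
    (hinv : ∀ a b c : S, mul (mul a b) c = mul (mul c b) a)
    (e : S) (he : ∀ x : S, mul e x = x) (μ : S → β)
    (hr : ∀ x y : S, μ x ≤ μ (mul x y)) (a b : S) :
    μ (mul a b) ≤ μ (mul b a) :=
  mul_swap_eq_mul_leftIdentity mul hinv e he a b ▸ hr (mul a b) e

theorem fuzzy_ideal_comm_general {S : Type*} (mul : S → S → S)
    (hinv : ∀ a b c : S, mul (mul a b) c = mul (mul c b) a)
    (e : S) (he : ∀ x : S, mul e x = x)
    (μ : S → ℝ)
    (hr : ∀ x y : S, μ x ≤ μ (mul x y)) :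
    ∀ a b : S, μ (mul a b) = μ (mul b a) := fun a b =>
  le_antisymm (le_mul_swap_of_le_mul_right mul hinv e he μ hr a b)
    (le_mul_swap_of_le_mul_right mul hinv e he μ hr b a)

/-- For a fuzzy two-sided ideal μ of a regular AG-groupoid with left
    identity, μ(a*b) = μ(b*a). -/
theorem fuzzy_ideal_comm {S : Type*} (mul : S → S → S)
    (hinv : ∀ a b c : S, mul (mul a b) c = mul (mul c b) a)
    (e : S) (he : ∀ x : S, mul e x = x)
    (hreg : ∀ a : S, ∃ x : S, a = mul (mul a x) a)
    (μ : S → ℝ) (hμ0 : ∀ x, 0 ≤ μ x) (hμ1 : ∀ x, μ x ≤ 1)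
    (hr : ∀ x y : S, μ x ≤ μ (mul x y))
    (hl : ∀ x y : S, μ y ≤ μ (mul x y)) :
    ∀ a b : S, μ (mul a b) = μ (mul b a) :=
  fuzzy_ideal_comm_general mul hinv e he μ hr
end

section
/- Let S be a regular AG-groupoid with left identity. A fuzzy subset μ is a fuzzy left ideal of S if and only if μ is a fuzzy bi-ideal of S (i.e., μ(x*y) ≥ min(μ(x),μ(y)) and μ((x*a)*y) ≥ min(μ(x), μ(y)) for all x, a, y). -/
/-!
In an AG-groupoid with left identity `e` the medial law `(a b)(c d) = (a c)(b d)` and the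
left-commutativity `a (b c) = b (a c)` hold. If `b = (b x) b`, they rewrite every product
`a b` as `(b t) b` with `t = (a e) x`, so the bi-ideal inequality at `(b, t, b)` gives
`μ b ≤ μ (a b)`. The converse is immediate since `min (μ x) (μ y) ≤ μ y`.
-/

section FuzzyIdeal

variable {S α : Type*} [LinearOrder α] (mul : S → S → S)

def IsFuzzyLeftIdeal (μ : S → α) : Prop :=
  ∀ x y, μ y ≤ μ (mul x y)

def IsFuzzyBiIdeal (μ : S → α) : Prop :=
  (∀ x y, min (μ x) (μ y) ≤ μ (mul x y)) ∧ ∀ x a y, min (μ x) (μ y) ≤ μ (mul (mul x a) y)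

variable {mul}

theorem IsFuzzyLeftIdeal.isFuzzyBiIdeal {μ : S → α} (h : IsFuzzyLeftIdeal mul μ) :
    IsFuzzyBiIdeal mul μ :=
  ⟨fun x y => (min_le_right _ _).trans (h x y),
    fun x a y => (min_le_right _ _).trans (h (mul x a) y)⟩

section LeftInvertive

variable (hinv : ∀ a b c : S, mul (mul a b) c = mul (mul c b) a)
include hinv

theorem mul_mul_mul_comm_of_leftInvertive (a b c d : S) :
    mul (mul a b) (mul c d) = mul (mul a c) (mul b d) := by
  rw [hinv, hinv c, hinv]

theorem mul_left_comm_of_leftInvertive {e : S} (he : ∀ x, mul e x = x) (a b c : S) :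
    mul a (mul b c) = mul b (mul a c) := by
  simpa only [he] using mul_mul_mul_comm_of_leftInvertive hinv e a b c

theorem mul_eq_mul_mul_of_regular {e : S} (he : ∀ x, mul e x = x) {b x : S}
    (hx : b = mul (mul b x) b) (a : S) :
    mul a b = mul (mul b (mul (mul a e) x)) b := by
  have hab : mul (mul a b) x = mul b (mul (mul a e) x) := by
    calc mul (mul a b) x = mul (mul a b) (mul e x) := by rw [he]
      _ = mul (mul a e) (mul b x) := mul_mul_mul_comm_of_leftInvertive hinv a b e x
      _ = mul b (mul (mul a e) x) := mul_left_comm_of_leftInvertive hinv he _ _ _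
  calc mul a b = mul a (mul (mul b x) b) := by rw [← hx]
    _ = mul (mul b x) (mul a b) := mul_left_comm_of_leftInvertive hinv he _ _ _
    _ = mul (mul (mul a b) x) b := hinv _ _ _
    _ = mul (mul b (mul (mul a e) x)) b := by rw [hab]

theorem IsFuzzyBiIdeal.isFuzzyLeftIdeal {e : S} (he : ∀ x, mul e x = x)
    (hreg : ∀ a : S, ∃ x, a = mul (mul a x) a) {μ : S → α} (h : IsFuzzyBiIdeal mul μ) :
    IsFuzzyLeftIdeal mul μ := by
  intro a b
  obtain ⟨x, hx⟩ := hreg b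
  simpa only [min_self, ← mul_eq_mul_mul_of_regular hinv he hx] using h.2 b (mul (mul a e) x) b

end LeftInvertive

end FuzzyIdeal

theorem fuzzy_left_iff_bi_general {S : Type*} (mul : S → S → S)
    (hinv : ∀ a b c : S, mul (mul a b) c = mul (mul c b) a)
    (e : S) (he : ∀ x : S, mul e x = x)
    (hreg : ∀ a : S, ∃ x : S, a = mul (mul a x) a)
    (μ : S → ℝ) :
    (∀ x y : S, μ y ≤ μ (mul x y)) ↔
      ((∀ x y : S, min (μ x) (μ y) ≤ μ (mul x y)) ∧
       (∀ x a y : S, min (μ x) (μ y) ≤ μ (mul (mul x a) y))) :=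
  ⟨IsFuzzyLeftIdeal.isFuzzyBiIdeal, IsFuzzyBiIdeal.isFuzzyLeftIdeal hinv he hreg⟩

/-- In a regular AG-groupoid with left identity, fuzzy left ideals
    coincide with fuzzy bi-ideals. -/
theorem fuzzy_left_iff_bi {S : Type*} (mul : S → S → S)
    (hinv : ∀ a b c : S, mul (mul a b) c = mul (mul c b) a)
    (e : S) (he : ∀ x : S, mul e x = x)
    (hreg : ∀ a : S, ∃ x : S, a = mul (mul a x) a)
    (μ : S → ℝ) (hμ0 : ∀ x, 0 ≤ μ x) (hμ1 : ∀ x, μ x ≤ 1) :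
    (∀ x y : S, μ y ≤ μ (mul x y)) ↔
      ((∀ x y : S, min (μ x) (μ y) ≤ μ (mul x y)) ∧
       (∀ x a y : S, min (μ x) (μ y) ≤ μ (mul (mul x a) y))) :=
  fuzzy_left_iff_bi_general mul hinv e he hreg μ
end

section
/- Every fuzzy right ideal of an intra-regular AG-groupoid with left identity is fuzzy semiprime: μ(a) ≥ μ(a*a) for all a. -/
/-! In an AG-groupoid with left identity `e` every product can be turned around,
`x * b = (b * x) * e`, so a fuzzy right ideal is also a fuzzy left ideal. Writing
`a = (x * (a * a)) * y` by intra-regularity, `μ (a * a) ≤ μ (x * (a * a)) ≤ μ a`. -/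

theorem mul_eq_mul_swap_mul_leftIdentity {S : Type*} (mul : S → S → S)
    (hinv : ∀ a b c : S, mul (mul a b) c = mul (mul c b) a)
    (e : S) (he : ∀ x : S, mul e x = x) (x b : S) :
    mul x b = mul (mul b x) e := by
  rw [hinv, he]

theorem le_apply_mul_left_of_le_apply_mul_right {S α : Type*} [Preorder α] (mul : S → S → S)
    (hinv : ∀ a b c : S, mul (mul a b) c = mul (mul c b) a)
    (e : S) (he : ∀ x : S, mul e x = x) (μ : S → α)
    (hright : ∀ u v : S, μ u ≤ μ (mul u v)) (u v : S) :
    μ v ≤ μ (mul u v) :=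
  calc μ v ≤ μ (mul v u) := hright _ _
    _ ≤ μ (mul (mul v u) e) := hright _ _
    _ = μ (mul u v) := by rw [← mul_eq_mul_swap_mul_leftIdentity mul hinv e he]

theorem fuzzy_right_semiprime_general {S : Type*} (mul : S → S → S)
    (hinv : ∀ a b c : S, mul (mul a b) c = mul (mul c b) a)
    (e : S) (he : ∀ x : S, mul e x = x)
    (hintra : ∀ a : S, ∃ x y : S, a = mul (mul x (mul a a)) y)
    (μ : S → ℝ)
    (hright : ∀ u v : S, μ u ≤ μ (mul u v)) :
    ∀ a : S, μ (mul a a) ≤ μ a := by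
  intro a
  obtain ⟨x, y, ha⟩ := hintra a
  calc μ (mul a a) ≤ μ (mul x (mul a a)) :=
        le_apply_mul_left_of_le_apply_mul_right mul hinv e he μ hright _ _
    _ ≤ μ (mul (mul x (mul a a)) y) := hright _ _
    _ = μ a := by rw [← ha]

/-- Every fuzzy right ideal of an intra-regular AG-groupoid with left
    identity is fuzzy semiprime. -/
theorem fuzzy_right_semiprime {S : Type*} (mul : S → S → S)
    (hinv : ∀ a b c : S, mul (mul a b) c = mul (mul c b) a)
    (e : S) (he : ∀ x : S, mul e x = x)
    (hintra : ∀ a : S, ∃ x y : S, a = mul (mul x (mul a a)) y)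
    (μ : S → ℝ) (hμ0 : ∀ x, 0 ≤ μ x) (hμ1 : ∀ x, μ x ≤ 1)
    (hright : ∀ u v : S, μ u ≤ μ (mul u v)) :
    ∀ a : S, μ (mul a a) ≤ μ a :=
  fuzzy_right_semiprime_general mul hinv e he hintra μ hright
end

section
/- Every fuzzy left ideal of an intra-regular AG-groupoid with left identity is fuzzy semiprime: μ(a) ≥ μ(a*a) for all a. -/
/-! The medial law and left commutativity, which hold in any AG-groupoid with left identity,
turn the intra-regularity witness `a = (x a²) y` into `a = t a²` with `t = ((x e) y) e`.
A fuzzy left ideal then gives `μ (a²) ≤ μ (t a²) = μ a`. -/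

namespace AGGroupoid

variable {S : Type*} {mul : S → S → S}

theorem mul_mul_mul_comm (hinv : ∀ a b c : S, mul (mul a b) c = mul (mul c b) a)
    (a b c d : S) : mul (mul a b) (mul c d) = mul (mul a c) (mul b d) := by
  rw [hinv a b (mul c d), hinv c d b, hinv (mul b d) c a]

theorem mul_left_comm (hinv : ∀ a b c : S, mul (mul a b) c = mul (mul c b) a)
    {e : S} (he : ∀ x : S, mul e x = x) (u v w : S) :
    mul u (mul v w) = mul v (mul u w) := by
  simpa only [he] using mul_mul_mul_comm hinv e u v w

theorem mul_mul_right_eq (hinv : ∀ a b c : S, mul (mul a b) c = mul (mul c b) a)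
    {e : S} (he : ∀ x : S, mul e x = x) (a b w : S) :
    mul (mul a b) w = mul (mul w e) (mul b a) := by
  rw [hinv w e, hinv b a e, he]

theorem exists_eq_mul_mul_self (hinv : ∀ a b c : S, mul (mul a b) c = mul (mul c b) a)
    {e : S} (he : ∀ x : S, mul e x = x) {a : S}
    (hintra : ∃ x y : S, a = mul (mul x (mul a a)) y) : ∃ t : S, a = mul t (mul a a) := by
  obtain ⟨x, y, ha⟩ := hintra
  refine ⟨mul (mul (mul x e) y) e, ?_⟩
  calc a = mul (mul x (mul a a)) (mul e y) := by rw [he, ← ha]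
    _ = mul (mul a a) (mul (mul x e) y) := by
      rw [mul_mul_mul_comm hinv, mul_left_comm hinv he]
    _ = mul (mul (mul (mul x e) y) e) (mul a a) := mul_mul_right_eq hinv he a a _

end AGGroupoid

theorem fuzzy_left_semiprime_general {S : Type*} (mul : S → S → S)
    (hinv : ∀ a b c : S, mul (mul a b) c = mul (mul c b) a)
    (e : S) (he : ∀ x : S, mul e x = x)
    (hintra : ∀ a : S, ∃ x y : S, a = mul (mul x (mul a a)) y)
    (μ : S → ℝ)
    (hleft : ∀ u v : S, μ v ≤ μ (mul u v)) :
    ∀ a : S, μ (mul a a) ≤ μ a := by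
  intro a
  obtain ⟨t, ht⟩ := AGGroupoid.exists_eq_mul_mul_self hinv he (hintra a)
  calc μ (mul a a) ≤ μ (mul t (mul a a)) := hleft t (mul a a)
    _ = μ a := by rw [← ht]

/-- Every fuzzy left ideal of an intra-regular AG-groupoid with left
    identity is fuzzy semiprime. -/
theorem fuzzy_left_semiprime {S : Type*} (mul : S → S → S)
    (hinv : ∀ a b c : S, mul (mul a b) c = mul (mul c b) a)
    (e : S) (he : ∀ x : S, mul e x = x)
    (hintra : ∀ a : S, ∃ x y : S, a = mul (mul x (mul a a)) y)
    (μ : S → ℝ) (hμ0 : ∀ x, 0 ≤ μ x) (hμ1 : ∀ x, μ x ≤ 1)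
    (hleft : ∀ u v : S, μ v ≤ μ (mul u v)) :
    ∀ a : S, μ (mul a a) ≤ μ a :=
  fuzzy_left_semiprime_general mul hinv e he hintra μ hleft
end

section
/- In an intra-regular AG-groupoid S with left identity, a fuzzy subset μ is a fuzzy left ideal if and only if it is a fuzzy right ideal. -/
/-!
In an AG-groupoid with left identity, the left invertive law gives the medial law
`(ab)(cd) = (ac)(bd)` and, through `e`, the identity `a(bc) = b(ac)`. With these, intra-regularity
`a = (x(aa))y` lets one rewrite any product `ab` both as `a(s(ta))`, which a fuzzy left ideal
bounds below by `μ a`, and as `(bs)t`, which a fuzzy right ideal bounds below by `μ b`.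
-/

section AGGroupoid

variable {S : Type*} (mul : S → S → S)

theorem medial_of_left_invertive (hinv : ∀ a b c : S, mul (mul a b) c = mul (mul c b) a)
    (a b c d : S) : mul (mul a b) (mul c d) = mul (mul a c) (mul b d) := by
  rw [hinv a b (mul c d), hinv c d b, hinv (mul b d) c a]

theorem mul_left_comm_of_left_invertive (hinv : ∀ a b c : S, mul (mul a b) c = mul (mul c b) a)
    {e : S} (he : ∀ x : S, mul e x = x) (a b c : S) :
    mul a (mul b c) = mul b (mul a c) := by
  simpa only [he] using medial_of_left_invertive mul hinv e a b c

theorem exists_mul_eq_mul_mul_mul_left (hinv : ∀ a b c : S, mul (mul a b) c = mul (mul c b) a)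
    {e : S} (he : ∀ x : S, mul e x = x) {a : S} (ha : ∃ x y : S, a = mul (mul x (mul a a)) y)
    (b : S) :
    ∃ s t : S, mul a b = mul a (mul s (mul t a)) := by
  have hcomm := mul_left_comm_of_left_invertive mul hinv he
  obtain ⟨x, y, ha⟩ := ha
  refine ⟨x, mul b y, ?_⟩
  calc mul a b = mul (mul (mul x (mul a a)) y) b := by rw [← ha]
    _ = mul (mul b y) (mul x (mul a a)) := hinv _ _ _
    _ = mul x (mul (mul b y) (mul a a)) := hcomm _ _ _
    _ = mul x (mul a (mul (mul b y) a)) := by rw [hcomm (mul b y) a a]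
    _ = mul a (mul x (mul (mul b y) a)) := hcomm _ _ _

theorem exists_mul_eq_mul_mul_right (hinv : ∀ a b c : S, mul (mul a b) c = mul (mul c b) a)
    {e : S} (he : ∀ x : S, mul e x = x) (a : S) {b : S}
    (hb : ∃ x y : S, b = mul (mul x (mul b b)) y) :
    ∃ s t : S, mul a b = mul (mul b s) t := by
  have hcomm := mul_left_comm_of_left_invertive mul hinv he
  obtain ⟨x, y, hb⟩ := hb
  refine ⟨mul x b, mul a y, ?_⟩
  calc mul a b = mul a (mul (mul x (mul b b)) y) := by rw [← hb]
    _ = mul (mul x (mul b b)) (mul a y) := hcomm _ _ _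
    _ = mul (mul b (mul x b)) (mul a y) := by rw [hcomm x b b]

end AGGroupoid

theorem fuzzy_left_iff_right_general {S : Type*} (mul : S → S → S)
    (hinv : ∀ a b c : S, mul (mul a b) c = mul (mul c b) a)
    (e : S) (he : ∀ x : S, mul e x = x)
    (hintra : ∀ a : S, ∃ x y : S, a = mul (mul x (mul a a)) y)
    (μ : S → ℝ) :
    (∀ u v : S, μ v ≤ μ (mul u v)) ↔ (∀ u v : S, μ u ≤ μ (mul u v)) := by
  constructor
  · intro hleft a b
    obtain ⟨s, t, hab⟩ := exists_mul_eq_mul_mul_mul_left mul hinv he (hintra a) b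
    calc μ a ≤ μ (mul t a) := hleft _ _
      _ ≤ μ (mul s (mul t a)) := hleft _ _
      _ ≤ μ (mul a b) := hab ▸ hleft _ _
  · intro hright a b
    obtain ⟨s, t, hab⟩ := exists_mul_eq_mul_mul_right mul hinv he a (hintra b)
    calc μ b ≤ μ (mul b s) := hright _ _
      _ ≤ μ (mul a b) := hab ▸ hright _ _

/-- In an intra-regular AG-groupoid with left identity, fuzzy left
    ideals coincide with fuzzy right ideals. -/
theorem fuzzy_left_iff_right {S : Type*} (mul : S → S → S)
    (hinv : ∀ a b c : S, mul (mul a b) c = mul (mul c b) a)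
    (e : S) (he : ∀ x : S, mul e x = x)
    (hintra : ∀ a : S, ∃ x y : S, a = mul (mul x (mul a a)) y)
    (μ : S → ℝ) (hμ0 : ∀ x, 0 ≤ μ x) (hμ1 : ∀ x, μ x ≤ 1) :
    (∀ u v : S, μ v ≤ μ (mul u v)) ↔ (∀ u v : S, μ u ≤ μ (mul u v)) :=
  fuzzy_left_iff_right_general mul hinv e he hintra μ
end

section
/- In an intra-regular AG-groupoid S with left identity, every fuzzy generalized bi-ideal is a fuzzy bi-ideal: if μ satisfies μ((x*a)*y) ≥ min(μ(x), μ(y)) for all x, a, y, then also μ(a*b) ≥ min(μ(a), μ(b)) for all a, b. -/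
/-!
With a left identity `e`, an intra-regular element `a = (x(aa))y` is a right multiple of itself:
`x(aa) = (aa)(xe)` by the paramedial law, so `a = (y(xe))(aa) = a((y(xe))a)`. Hence
`ab = (at)b` for some `t`, a product of exactly the shape a fuzzy generalized bi-ideal controls.
-/

namespace AGGroupoid

variable {S : Type*} {mul : S → S → S}

def LeftInvertive (mul : S → S → S) : Prop :=
  ∀ a b c : S, mul (mul a b) c = mul (mul c b) a

def IsIntraRegular (mul : S → S → S) (a : S) : Prop :=
  ∃ x y : S, a = mul (mul x (mul a a)) y

namespace LeftInvertive

theorem medial (hinv : LeftInvertive mul) (a b c d : S) :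
    mul (mul a b) (mul c d) = mul (mul a c) (mul b d) := by
  rw [hinv, hinv c, hinv]

theorem left_comm (hinv : LeftInvertive mul) {e : S} (he : ∀ x : S, mul e x = x) (a b c : S) :
    mul a (mul b c) = mul b (mul a c) := by
  simpa only [he] using hinv.medial e a b c

theorem paramedial (hinv : LeftInvertive mul) {e : S} (he : ∀ x : S, mul e x = x)
    (a b c d : S) : mul (mul a b) (mul c d) = mul (mul d b) (mul c a) := by
  rw [hinv.left_comm he, hinv a b d, hinv.left_comm he c]

theorem exists_eq_mul_of_isIntraRegular (hinv : LeftInvertive mul) {e : S}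
    (he : ∀ x : S, mul e x = x) {a : S} (ha : IsIntraRegular mul a) : ∃ t : S, a = mul a t := by
  obtain ⟨x, y, hxy⟩ := ha
  have hsq : mul x (mul a a) = mul (mul a a) (mul x e) := by
    nth_rewrite 1 [← he x]
    rw [hinv.paramedial he, hinv.medial]
  refine ⟨mul (mul y (mul x e)) a, ?_⟩
  rw [← hinv.left_comm he, ← hinv, ← hsq, ← hxy]

end LeftInvertive

end AGGroupoid

theorem fuzzy_gen_bi_is_bi_general {S : Type*} (mul : S → S → S)
    (hinv : ∀ a b c : S, mul (mul a b) c = mul (mul c b) a)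
    (e : S) (he : ∀ x : S, mul e x = x)
    (hintra : ∀ a : S, ∃ x y : S, a = mul (mul x (mul a a)) y)
    (μ : S → ℝ)
    (hgb : ∀ x a y : S, min (μ x) (μ y) ≤ μ (mul (mul x a) y)) :
    ∀ a b : S, min (μ a) (μ b) ≤ μ (mul a b) := by
  intro a b
  obtain ⟨t, ht⟩ := AGGroupoid.LeftInvertive.exists_eq_mul_of_isIntraRegular hinv he (hintra a)
  simpa only [← ht] using hgb a t b

/-- In an intra-regular AG-groupoid with left identity, every fuzzy
    generalized bi-ideal is a fuzzy bi-ideal. -/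
theorem fuzzy_gen_bi_is_bi {S : Type*} (mul : S → S → S)
    (hinv : ∀ a b c : S, mul (mul a b) c = mul (mul c b) a)
    (e : S) (he : ∀ x : S, mul e x = x)
    (hintra : ∀ a : S, ∃ x y : S, a = mul (mul x (mul a a)) y)
    (μ : S → ℝ) (hμ0 : ∀ x, 0 ≤ μ x) (hμ1 : ∀ x, μ x ≤ 1)
    (hgb : ∀ x a y : S, min (μ x) (μ y) ≤ μ (mul (mul x a) y)) :
    ∀ a b : S, min (μ a) (μ b) ≤ μ (mul a b) :=
  fuzzy_gen_bi_is_bi_general mul hinv e he hintra μ hgb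
end
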